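/- Let q be a real quadratic form in n variables whose diagonal part ∑ᵢ aᵢᵢxᵢ² is identically zero (or more generally positive semidefinite), where q = ∑_{i,j} aᵢⱼxᵢxⱼ. Then for every z ∈ ℤⁿ, the quadratic module QM(q) generated by q in ℝ[x₁,…,xₙ] is totally stable with respect to the z-grading. -/

import Mathlib

/-!
For sums of squares `s₀, s₁`, the `z`-degree of `s₀ + s₁ * q` is the larger of the degrees of
`s₀` and `s₁ * q`. Otherwise the top `z`-homogeneous components cancel: `S + T * Q = 0` with
`S, T` sums of squares, `T ≠ 0` and `Q ≠ 0` the top component of `q`. Then `Q ≤ 0` on the dense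
set where `T > 0`, hence everywhere. `Q` is again a quadratic form with nonnegative diagonal, and
testing it on `eᵢ` and `eᵢ ± eⱼ` shows that such a form is nowhere positive only if it vanishes.
Top components of sums of squares are sums of squares, which cannot cancel either, so degrees of
sums of squares add as maxima, and passing from `f = σ₀ + σ₁ * q` to
`f + g = (σ₀ + τ₀) + (σ₁ + τ₁) * q` cannot lower the degree.
-/

open MvPolynomial

/-- The degree of a polynomial with respect to the `z`-grading, where the monomial `x^δ`
has degree `⟨z, δ⟩`; the zero polynomial has degree `⊥`. -/
noncomputable def zDeg {n : ℕ} (z : Fin n → ℤ) (f : MvPolynomial (Fin n) ℝ) : WithBot ℤ :=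
  f.support.sup fun δ => ((∑ i, z i * (δ i : ℤ) : ℤ) : WithBot ℤ)

open Finsupp (weight)

namespace Finsupp

variable {σ : Type*}

theorem exists_eq_single_one_add_of_degree_eq_succ {d : σ →₀ ℕ} {k : ℕ}
    (h : d.degree = k + 1) : ∃ i e, d = single i 1 + e ∧ e.degree = k := by
  obtain ⟨i, hi⟩ : ∃ i, d i ≠ 0 := by
    by_contra! h0
    rw [show d = 0 from Finsupp.ext h0, map_zero] at h
    omega
  have hle : single i 1 ≤ d := single_le_iff.2 (Nat.one_le_iff_ne_zero.2 hi)
  refine ⟨i, d - single i 1, (add_tsub_cancel_of_le hle).symm, ?_⟩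
  rw [← add_tsub_cancel_of_le hle, map_add, degree_single] at h
  omega

theorem exists_eq_single_add_single_of_degree_eq_two {d : σ →₀ ℕ} (h : d.degree = 2) :
    ∃ i j, d = single i 1 + single j 1 := by
  obtain ⟨i, e, rfl, he⟩ := exists_eq_single_one_add_of_degree_eq_succ h
  obtain ⟨j, e', rfl, he'⟩ := exists_eq_single_one_add_of_degree_eq_succ he
  rw [(degree_eq_zero_iff e').1 he', add_zero]
  exact ⟨i, j, rfl⟩

theorem single_add_single_eq_single_two_iff {i j k : σ} :
    single i 1 + single j 1 = single k 2 ↔ i = k ∧ j = k := by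
  rw [show (2 : ℕ) = 1 + 1 from rfl, single_add,
    single_add_single_eq_single_add_single one_ne_zero one_ne_zero]
  simp

end Finsupp

theorem IsSumSq.map {R S : Type*} [Semiring R] [Semiring S] (f : R →+* S) {s : R}
    (hs : IsSumSq s) : IsSumSq (f s) := by
  induction hs with
  | zero => simp
  | sq_add a _ ih => simpa using ih.sq_add (f a)

theorem sum_mul_mul_eq_zero_of_nonpos {σ : Type*} [Fintype σ] {A : σ → σ → ℝ}
    (hdiag : ∀ i, 0 ≤ A i i) (h : ∀ x : σ → ℝ, ∑ i, ∑ j, A i j * x i * x j ≤ 0) (x : σ → ℝ) :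
    ∑ i, ∑ j, A i j * x i * x j = 0 := by
  classical
  have hline : ∀ k l (s : ℝ), ∑ i, ∑ j, A i j * (Pi.single k 1 + Pi.single l s : σ → ℝ) i *
      (Pi.single k 1 + Pi.single l s : σ → ℝ) j = A k k + (A k l + A l k) * s + A l l * s ^ 2 := by
    intro k l s
    simp [Pi.single_apply, add_mul, mul_add, Finset.sum_add_distrib, ite_mul, mul_ite]
    ring
  have hdiag0 : ∀ k, A k k = 0 := fun k =>
    le_antisymm (by simpa using (hline k k 0).symm.trans_le (h _)) (hdiag k)
  have hanti : ∀ k l, A l k = -A k l := fun k l => by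
    have h₁ := (hline k l 1).symm.trans_le (h _)
    have h₂ := (hline k l (-1)).symm.trans_le (h _)
    simp only [hdiag0] at h₁ h₂
    linarith
  have hneg : ∑ i, ∑ j, A i j * x i * x j = -∑ i, ∑ j, A i j * x i * x j :=
    calc ∑ i, ∑ j, A i j * x i * x j = ∑ i, ∑ j, -(A j i * x j * x i) :=
          Finset.sum_congr rfl fun i _ => Finset.sum_congr rfl fun j _ => by rw [hanti j i]; ring
      _ = -∑ i, ∑ j, A i j * x i * x j := by
          rw [Finset.sum_comm]; simp only [Finset.sum_neg_distrib]
  linarith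

namespace MvPolynomial

section WeightedDegree

variable {σ R M : Type*} [CommSemiring R] [AddCommMonoid M] [LinearOrder M]
  {w : σ → M} {p q : MvPolynomial σ R} {m : M}

theorem weightedTotalDegree'_le_iff :
    weightedTotalDegree' w p ≤ m ↔ ∀ d ∈ p.support, weight w d ≤ m := by
  simp [weightedTotalDegree']

theorem le_weightedTotalDegree' {d : σ →₀ ℕ} (hd : d ∈ p.support) :
    (weight w d : WithBot M) ≤ weightedTotalDegree' w p :=
  Finset.le_sup (f := fun d => (weight w d : WithBot M)) hd

theorem weightedTotalDegree'_add_le :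
    weightedTotalDegree' w (p + q) ≤
      max (weightedTotalDegree' w p) (weightedTotalDegree' w q) := by
  classical
  exact Finset.sup_le fun d hd => (Finset.mem_union.1 (support_add hd)).elim
    (fun h => le_max_of_le_left (le_weightedTotalDegree' h))
    (fun h => le_max_of_le_right (le_weightedTotalDegree' h))

theorem weightedHomogeneousComponent_eq_zero_of_lt (h : weightedTotalDegree' w p < m) :
    weightedHomogeneousComponent w m p = 0 :=
  weightedHomogeneousComponent_eq_zero' m p fun _d hd hdm =>
    (le_weightedTotalDegree' hd).not_gt (hdm ▸ h)

theorem weightedTotalDegree'_eq_coe_iff :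
    weightedTotalDegree' w p = m ↔
      weightedTotalDegree' w p ≤ m ∧ weightedHomogeneousComponent w m p ≠ 0 := by
  constructor
  · intro h
    refine ⟨h.le, fun h0 => ?_⟩
    have hlt : weightedTotalDegree' w p < m := by
      refine (Finset.sup_lt_iff (WithBot.bot_lt_coe m)).2 fun d hd => ?_
      have hdm : weight w d ≠ m := fun hdm => by
        have := coeff_weightedHomogeneousComponent (w := w) m p d
        rw [h0, if_pos hdm, coeff_zero] at this
        exact mem_support_iff.1 hd this.symm
      exact WithBot.coe_lt_coe.2 ((weightedTotalDegree'_le_iff.1 h.le d hd).lt_of_ne hdm)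
    exact hlt.ne h
  · rintro ⟨hle, hne⟩
    obtain ⟨d, hd⟩ := ne_zero_iff.1 hne
    rw [coeff_weightedHomogeneousComponent] at hd
    split_ifs at hd with hdm
    · exact hle.antisymm (hdm ▸ le_weightedTotalDegree' (mem_support_iff.2 hd))
    · exact absurd rfl hd

theorem IsWeightedHomogeneous.weightedHomogeneousComponent {N : Type*} [AddCommMonoid N]
    {w' : σ → N} {n : N} (hp : p.IsWeightedHomogeneous w' n) (w : σ → M) (m : M) :
    (weightedHomogeneousComponent w m p).IsWeightedHomogeneous w' n := fun d hd => hp <| by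
  rw [coeff_weightedHomogeneousComponent] at hd
  split_ifs at hd
  exacts [hd, absurd rfl hd]

theorem weightedTotalDegree'_add_eq_max
    (h : ∀ m : M, weightedTotalDegree' w p ≤ m → weightedTotalDegree' w q ≤ m →
      weightedHomogeneousComponent w m p + weightedHomogeneousComponent w m q = 0 →
      weightedHomogeneousComponent w m p = 0) :
    weightedTotalDegree' w (p + q) =
      max (weightedTotalDegree' w p) (weightedTotalDegree' w q) := by
  rcases eq_or_ne (max (weightedTotalDegree' w p) (weightedTotalDegree' w q)) ⊥ with hbot | hne
  · rw [hbot]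
    exact le_bot_iff.1 (hbot ▸ weightedTotalDegree'_add_le)
  obtain ⟨m, hm⟩ := WithBot.ne_bot_iff_exists.1 hne
  rw [← hm, weightedTotalDegree'_eq_coe_iff, map_add]
  refine ⟨hm ▸ weightedTotalDegree'_add_le, fun h0 => ?_⟩
  have hp0 := h m (hm ▸ le_max_left _ _) (hm ▸ le_max_right _ _) h0
  have hq0 : weightedHomogeneousComponent w m q = 0 := by rwa [hp0, zero_add] at h0
  rcases max_choice (weightedTotalDegree' w p) (weightedTotalDegree' w q) with hmax | hmax
  · exact (weightedTotalDegree'_eq_coe_iff.1 (hmax ▸ hm).symm).2 hp0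
  · exact (weightedTotalDegree'_eq_coe_iff.1 (hmax ▸ hm).symm).2 hq0

variable [IsOrderedCancelAddMonoid M]

theorem weightedTotalDegree'_mul_le {a b : M} (hp : weightedTotalDegree' w p ≤ a)
    (hq : weightedTotalDegree' w q ≤ b) : weightedTotalDegree' w (p * q) ≤ ↑(a + b) := by
  classical
  refine weightedTotalDegree'_le_iff.2 fun d hd => ?_
  obtain ⟨α, hα, β, hβ, rfl⟩ := Finset.mem_add.1 (support_mul p q hd)
  rw [map_add]
  exact add_le_add (weightedTotalDegree'_le_iff.1 hp α hα) (weightedTotalDegree'_le_iff.1 hq β hβ)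

theorem weightedHomogeneousComponent_mul_of_le {a b : M} (hp : weightedTotalDegree' w p ≤ a)
    (hq : weightedTotalDegree' w q ≤ b) :
    weightedHomogeneousComponent w (a + b) (p * q) =
      weightedHomogeneousComponent w a p * weightedHomogeneousComponent w b q := by
  classical
  ext d
  rw [coeff_weightedHomogeneousComponent, coeff_mul, coeff_mul, Finset.ite_sum_zero]
  refine Finset.sum_congr rfl fun ⟨α, β⟩ hαβ => ?_
  rw [Finset.HasAntidiagonal.mem_antidiagonal] at hαβ
  subst hαβ
  simp only [coeff_weightedHomogeneousComponent]
  by_cases hα : coeff α p = 0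
  · simp [hα]
  by_cases hβ : coeff β q = 0
  · simp [hβ]
  have key := add_eq_add_iff_eq_and_eq
    (weightedTotalDegree'_le_iff.1 hp α (mem_support_iff.2 hα))
    (weightedTotalDegree'_le_iff.1 hq β (mem_support_iff.2 hβ))
  simp only [map_add, key]
  by_cases ha : weight w α = a <;> by_cases hb : weight w β = b <;> simp [ha, hb]

theorem weightedTotalDegree'_mul [NoZeroDivisors R] (p q : MvPolynomial σ R) :
    weightedTotalDegree' w (p * q) = weightedTotalDegree' w p + weightedTotalDegree' w q := by
  rcases eq_or_ne p 0 with rfl | hp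
  · simp [weightedTotalDegree'_zero]
  rcases eq_or_ne q 0 with rfl | hq
  · simp [weightedTotalDegree'_zero]
  obtain ⟨a, ha⟩ := WithBot.ne_bot_iff_exists.1 ((weightedTotalDegree'_eq_bot_iff w p).not.2 hp)
  obtain ⟨b, hb⟩ := WithBot.ne_bot_iff_exists.1 ((weightedTotalDegree'_eq_bot_iff w q).not.2 hq)
  rw [← ha, ← hb, ← WithBot.coe_add, weightedTotalDegree'_eq_coe_iff,
    weightedHomogeneousComponent_mul_of_le ha.ge hb.ge]
  exact ⟨weightedTotalDegree'_mul_le ha.ge hb.ge,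
    mul_ne_zero (weightedTotalDegree'_eq_coe_iff.1 ha.symm).2
      (weightedTotalDegree'_eq_coe_iff.1 hb.symm).2⟩

theorem isSumSq_weightedHomogeneousComponent_mul_self [NoZeroDivisors R] (a : MvPolynomial σ R)
    (h : weightedTotalDegree' w (a * a) ≤ m) :
    IsSumSq (weightedHomogeneousComponent w m (a * a)) := by
  rcases eq_or_ne a 0 with rfl | ha
  · simp
  obtain ⟨e, he⟩ := WithBot.ne_bot_iff_exists.1 ((weightedTotalDegree'_eq_bot_iff w a).not.2 ha)
  rcases h.eq_or_lt with h | h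
  · obtain rfl : m = e + e := by
      rw [weightedTotalDegree'_mul, ← he] at h
      exact (WithBot.coe_inj.1 h).symm
    rw [weightedHomogeneousComponent_mul_of_le he.ge he.ge]
    exact IsSumSq.mul_self _
  · rw [weightedHomogeneousComponent_eq_zero_of_lt h]
    exact IsSumSq.zero

end WeightedDegree

section SumsOfSquares

variable {σ M : Type*} [AddCommMonoid M] [LinearOrder M] [IsOrderedCancelAddMonoid M]
  {w : σ → M} {s t : MvPolynomial σ ℝ} {m : M}

theorem _root_.IsSumSq.eval_nonneg (hs : IsSumSq s) (x : σ → ℝ) : 0 ≤ eval x s :=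
  (hs.map (eval x)).nonneg

theorem _root_.IsSumSq.eq_zero_of_add_eq_zero (hs : IsSumSq s) (ht : IsSumSq t)
    (h : s + t = 0) : s = 0 :=
  funext fun x => by
    have := congrArg (eval x) h
    rw [map_add, map_zero] at this
    rw [map_zero]
    linarith [hs.eval_nonneg x, ht.eval_nonneg x]

theorem _root_.IsSumSq.weightedHomogeneousComponent (hs : IsSumSq s)
    (h : weightedTotalDegree' w s ≤ m) : IsSumSq (weightedHomogeneousComponent w m s) := by
  induction hs generalizing m with
  | zero => simp
  | sq_add a _ ih =>
    rw [weightedTotalDegree'_add_eq_max fun k hk hk' h0 =>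
      (isSumSq_weightedHomogeneousComponent_mul_self a hk).eq_zero_of_add_eq_zero (ih hk') h0,
      max_le_iff] at h
    rw [map_add]
    exact (isSumSq_weightedHomogeneousComponent_mul_self a h.1).add (ih h.2)

theorem weightedTotalDegree'_add_of_isSumSq (hs : IsSumSq s) (ht : IsSumSq t) :
    weightedTotalDegree' w (s + t) =
      max (weightedTotalDegree' w s) (weightedTotalDegree' w t) :=
  weightedTotalDegree'_add_eq_max fun _k hk hk' h0 =>
    (hs.weightedHomogeneousComponent hk).eq_zero_of_add_eq_zero
      (ht.weightedHomogeneousComponent hk') h0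

end SumsOfSquares

section RealForms

variable {σ : Type*} [Fintype σ]

theorem eq_zero_of_eval_eq_zero_on_isOpen {P : MvPolynomial σ ℝ} {U : Set (σ → ℝ)}
    (hU : IsOpen U) (hne : U.Nonempty) (h : ∀ x ∈ U, eval x P = 0) : P = 0 := by
  obtain ⟨x, hx⟩ := hne
  obtain ⟨ε, hε, hball⟩ := Metric.isOpen_iff.1 hU x hx
  refine funext_set (fun i => Metric.ball (x i) ε) (fun i => ?_) fun y hy => ?_
  · rw [Real.ball_eq_Ioo]
    exact Set.Ioo_infinite (by linarith)
  · rw [h y (hball (by rwa [ball_pi x hε])), map_zero]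

theorem eval_nonpos_of_isSumSq_add_mul_eq_zero {S T Q : MvPolynomial σ ℝ} (hS : IsSumSq S)
    (hT : IsSumSq T) (hT0 : T ≠ 0) (h : S + T * Q = 0) (x : σ → ℝ) : eval x Q ≤ 0 := by
  by_contra! hx
  refine hT0 (eq_zero_of_eval_eq_zero_on_isOpen (isOpen_lt continuous_const (continuous_eval Q))
    ⟨x, hx⟩ fun y hy => ?_)
  have hy' := congrArg (eval y) h
  rw [map_add, map_mul, map_zero] at hy'
  exact le_antisymm (nonpos_of_mul_nonpos_left (by linarith [hS.eval_nonneg y]) hy)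
    (hT.eval_nonneg y)

theorem IsHomogeneous.exists_eq_sum_C_mul_X_mul_X {R : Type*} [CommSemiring R]
    {Q : MvPolynomial σ R} (hQ : Q.IsHomogeneous 2) :
    ∃ A : σ → σ → R, Q = ∑ i, ∑ j, C (A i j) * X i * X j := by
  classical
  rw [Q.as_sum]
  refine Finset.sum_induction _ (fun p => ∃ A : σ → σ → R, p = ∑ i, ∑ j, C (A i j) * X i * X j)
    (fun _ _ ⟨A, hA⟩ ⟨B, hB⟩ => ⟨A + B, by simp [hA, hB, add_mul, Finset.sum_add_distrib]⟩)
    ⟨0, by simp⟩ fun d hd => ?_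
  have hdeg : d.degree = 2 := by
    rw [Finsupp.degree_eq_weight_one]
    exact hQ (mem_support_iff.1 hd)
  obtain ⟨i, j, hij⟩ := Finsupp.exists_eq_single_add_single_of_degree_eq_two hdeg
  refine ⟨fun k l => if k = i ∧ l = j then coeff d Q else 0, ?_⟩
  subst hij
  simp [ite_and, apply_ite C, X, C_mul_monomial, monomial_mul]

theorem coeff_single_two_sum_C_mul_X_mul_X {R : Type*} [CommSemiring R] (A : σ → σ → R)
    (k : σ) : coeff (Finsupp.single k 2) (∑ i, ∑ j, C (A i j) * X i * X j) = A k k := by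
  classical
  simp [coeff_sum, mul_assoc, coeff_C_mul, X, monomial_mul, coeff_monomial,
    Finsupp.single_add_single_eq_single_two_iff, ite_and]

theorem IsHomogeneous.eq_zero_of_eval_nonpos {Q : MvPolynomial σ ℝ} (hQ : Q.IsHomogeneous 2)
    (hdiag : ∀ i, 0 ≤ coeff (Finsupp.single i 2) Q) (h : ∀ x, eval x Q ≤ 0) : Q = 0 := by
  obtain ⟨A, rfl⟩ := hQ.exists_eq_sum_C_mul_X_mul_X
  have heval : ∀ x, eval x (∑ i, ∑ j, C (A i j) * X i * X j) = ∑ i, ∑ j, A i j * x i * x j := by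
    simp
  simp only [coeff_single_two_sum_C_mul_X_mul_X] at hdiag
  exact MvPolynomial.funext fun x => by
    rw [heval, map_zero]
    exact sum_mul_mul_eq_zero_of_nonpos hdiag (fun y => heval y ▸ h y) x

theorem weightedTotalDegree'_add_mul_of_isSumSq {M : Type*} [AddCommMonoid M] [LinearOrder M]
    [IsOrderedCancelAddMonoid M] {w : σ → M} {q s₀ s₁ : MvPolynomial σ ℝ}
    (hq : q.IsHomogeneous 2) (hdiag : ∀ i, 0 ≤ coeff (Finsupp.single i 2) q)
    (hs₀ : IsSumSq s₀) (hs₁ : IsSumSq s₁) :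
    weightedTotalDegree' w (s₀ + s₁ * q) =
      max (weightedTotalDegree' w s₀) (weightedTotalDegree' w (s₁ * q)) := by
  refine weightedTotalDegree'_add_eq_max fun m h₀ h₁ h0 => ?_
  by_contra hS
  have hTQ : weightedHomogeneousComponent w m (s₁ * q) ≠ 0 := fun h' =>
    hS (by rwa [h', add_zero] at h0)
  have hdeg := weightedTotalDegree'_eq_coe_iff.2 ⟨h₁, hTQ⟩
  rw [weightedTotalDegree'_mul] at hdeg
  obtain ⟨e, c, he, hc, rfl⟩ := WithBot.add_eq_coe.1 hdeg
  rw [weightedHomogeneousComponent_mul_of_le he.ge hc.ge] at h0 hTQ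
  have hQdiag : ∀ i, 0 ≤ coeff (Finsupp.single i 2) (weightedHomogeneousComponent w c q) := by
    intro i
    rw [coeff_weightedHomogeneousComponent]
    split_ifs
    exacts [hdiag i, le_rfl]
  refine right_ne_zero_of_mul hTQ (IsHomogeneous.eq_zero_of_eval_nonpos
    (IsWeightedHomogeneous.weightedHomogeneousComponent hq w c) hQdiag ?_)
  exact eval_nonpos_of_isSumSq_add_mul_eq_zero (hs₀.weightedHomogeneousComponent h₀)
    (hs₁.weightedHomogeneousComponent he.ge) (left_ne_zero_of_mul hTQ) h0

end RealForms

end MvPolynomial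

theorem zDeg_eq_weightedTotalDegree' {n : ℕ} (z : Fin n → ℤ) (f : MvPolynomial (Fin n) ℝ) :
    zDeg z f = weightedTotalDegree' z f := by
  simp only [zDeg, weightedTotalDegree', Finsupp.weight_eq_sum, nsmul_eq_mul, mul_comm]

theorem stmt_18 (n : ℕ) (q : MvPolynomial (Fin n) ℝ) (hq : q.IsHomogeneous 2)
    (hdiag : ∀ x : Fin n → ℝ, 0 ≤ ∑ i, coeff (Finsupp.single i 2) q * x i ^ 2)
    (z : Fin n → ℤ) :
    ∀ f g : MvPolynomial (Fin n) ℝ,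
      (∃ σ₀ σ₁ : MvPolynomial (Fin n) ℝ, IsSumSq σ₀ ∧ IsSumSq σ₁ ∧ f = σ₀ + σ₁ * q) →
      (∃ τ₀ τ₁ : MvPolynomial (Fin n) ℝ, IsSumSq τ₀ ∧ IsSumSq τ₁ ∧ g = τ₀ + τ₁ * q) →
      zDeg z f ≤ zDeg z (f + g) := by
  rintro f g ⟨σ₀, σ₁, hσ₀, hσ₁, rfl⟩ ⟨τ₀, τ₁, hτ₀, hτ₁, rfl⟩
  have hdiag' : ∀ i, 0 ≤ coeff (Finsupp.single i 2) q := fun i => by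
    simpa [Pi.single_apply] using hdiag (Pi.single i 1)
  have hsum : σ₀ + σ₁ * q + (τ₀ + τ₁ * q) = (σ₀ + τ₀) + (σ₁ + τ₁) * q := by ring
  simp only [zDeg_eq_weightedTotalDegree', hsum,
    weightedTotalDegree'_add_mul_of_isSumSq hq hdiag' hσ₀ hσ₁,
    weightedTotalDegree'_add_mul_of_isSumSq hq hdiag' (hσ₀.add hτ₀) (hσ₁.add hτ₁),
    weightedTotalDegree'_mul, weightedTotalDegree'_add_of_isSumSq hσ₀ hτ₀,
    weightedTotalDegree'_add_of_isSumSq hσ₁ hτ₁]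
  gcongr <;> exact le_max_left _ _
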